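/- Let 0 ≤ q_l < q_r be real numbers and let x be a real number with q_l < x < q_r, regarded as an element of ℂ. Then |r(x)| = 1, where r is given by the principal-branch formula; i.e. the boundary value of the reflection coefficient on the band (q_l, q_r) has modulus one. -/

import Mathlib

open Complex

/-- `β_q(z) = ((z − q)/(z + q))^{1/4}` with the principal branch of the complex power. -/
noncomputable def betaFn (q : ℝ) (z : ℂ) : ℂ := ((z - (q : ℂ)) / (z + (q : ℂ))) ^ ((1 : ℂ) / 4)

/-- The reflection coefficient
`r(z) = −i(β_{q_l}² − β_{q_r}²)/(β_{q_l}² + β_{q_r}²)`. -/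
noncomputable def rFn (ql qr : ℝ) (z : ℂ) : ℂ :=
  -Complex.I * ((betaFn ql z) ^ 2 - (betaFn qr z) ^ 2) / ((betaFn ql z) ^ 2 + (betaFn qr z) ^ 2)

lemma beta_sq (q : ℝ) (z : ℂ) (hz : (z - (q:ℂ)) / (z + (q:ℂ)) ≠ 0) :
    (betaFn q z) ^ 2 = ((z - (q:ℂ)) / (z + (q:ℂ))) ^ ((1:ℂ)/2) := by
  rw [betaFn, sq, ← Complex.cpow_add _ _ hz]
  norm_num

lemma neg_real_cpow_half (u : ℝ) (hu : u < 0) :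
    (u:ℂ) ^ ((1:ℂ)/2) = (Real.sqrt (-u) : ℂ) * Complex.I := by
  rw [Complex.cpow_def_of_ne_zero (by exact_mod_cast hu.ne)]
  rw [Complex.log]
  rw [Complex.arg_ofReal_of_neg hu]
  have habs : ‖(u:ℂ)‖ = -u := by
    rw [Complex.norm_real, Real.norm_eq_abs, abs_of_neg hu]
  rw [habs]
  have : ((Real.log (-u) : ℂ) + Real.pi * I) * ((1:ℂ)/2) = (Real.log (-u) / 2 : ℝ) + (Real.pi/2 : ℝ) * I := by
    push_cast; ring
  have h1 : Real.exp (Real.log (-u) / 2) = Real.sqrt (-u) := by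
    rw [Real.sqrt_eq_rpow, Real.rpow_def_of_pos (by linarith)]
    ring_nf
  rw [this, Complex.exp_add, Complex.exp_mul_I, ← Complex.ofReal_cos, ← Complex.ofReal_sin,
      Real.cos_pi_div_two, Real.sin_pi_div_two, ← Complex.ofReal_exp, h1]
  simp

/-- On the band `(q_l, q_r)` the boundary value of the reflection coefficient from the
upper half-plane (given by the principal branch) has modulus one: `|r(x)| = 1`. -/
theorem reflection_modulus_one_on_band (ql qr : ℝ) (hql : 0 ≤ ql) (hlr : ql < qr)
    (x : ℝ) (hx1 : ql < x) (hx2 : x < qr) :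
    ‖rFn ql qr (x : ℂ)‖ = 1 := by
  have hx0 : 0 < x := lt_of_le_of_lt hql hx1
  have hxl : 0 < x - ql := by linarith
  have hxl' : 0 < x + ql := by linarith
  have hxr : x - qr < 0 := by linarith
  have hxr' : 0 < x + qr := by linarith
  set a0 : ℝ := (x - ql) / (x + ql) with ha0
  have ha0pos : 0 < a0 := div_pos hxl hxl'
  set t0 : ℝ := (x - qr) / (x + qr) with ht0
  have ht0neg : t0 < 0 := div_neg_of_neg_of_pos hxr hxr'
  have hcastl : ((x:ℂ) - (ql:ℂ)) / ((x:ℂ) + (ql:ℂ)) = (a0 : ℂ) := by rw [ha0]; push_cast; ring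
  have hcastr : ((x:ℂ) - (qr:ℂ)) / ((x:ℂ) + (qr:ℂ)) = (t0 : ℂ) := by rw [ht0]; push_cast; ring
  set a : ℝ := a0 ^ ((1:ℝ)/2) with ha
  have hapos : 0 < a := Real.rpow_pos_of_pos ha0pos _
  set t : ℝ := Real.sqrt (-t0) with ht
  have htpos : 0 < t := Real.sqrt_pos.mpr (by linarith)
  have hbl : (betaFn ql (x:ℂ)) ^ 2 = (a : ℂ) := by
    rw [beta_sq _ _ (by rw [hcastl]; exact_mod_cast ha0pos.ne'), hcastl]
    have : ((1:ℂ)/2) = (((1:ℝ)/2 : ℝ) : ℂ) := by norm_num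
    rw [this, ← Complex.ofReal_cpow ha0pos.le]
  have hbr : (betaFn qr (x:ℂ)) ^ 2 = (t : ℂ) * Complex.I := by
    rw [beta_sq _ _ (by rw [hcastr]; exact_mod_cast ht0neg.ne), hcastr]
    exact neg_real_cpow_half t0 ht0neg
  rw [rFn, hbl, hbr]
  have hz : (a : ℂ) + (t:ℂ) * Complex.I ≠ 0 := by
    intro h
    have := congrArg Complex.re h
    simp at this
    linarith
  have hconj : (a : ℂ) - (t:ℂ) * Complex.I = starRingEnd ℂ ((a:ℂ) + (t:ℂ) * Complex.I) := by
    simp [map_add, map_mul, Complex.conj_I, Complex.conj_ofReal]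
    ring
  rw [mul_div_assoc, norm_mul, hconj, norm_div, Complex.norm_conj,
      div_self (by simpa using hz)]
  simp
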